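/- (Proposition 4.1) For every construction G and every Y in {N,S}: (W) if YW(G)=(a,b) in G, then YW(b)=(a,b) in λ(G); and (E) if YE(G)=(a,b) in G, then YE(a)=(a,b) in λ(G). -/
import Mathlib


namespace PluralCuts

/-- The two horizontal directions: west and east. -/
inductive XDir : Type
  | W
  | E
deriving DecidableEq

/-- The two vertical directions: north and south. -/
inductive YDir : Type
  | N
  | S
deriving DecidableEq

/-- The other element of `{W, E}`. -/
def XDir.other : XDir → XDir
  | .W => .E
  | .E => .W

/-- A helper choosing between two values according to an `XDir`. -/
def pick {α : Type*} (w e : α) : XDir → α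
  | .W => w
  | .E => e

/-- A digraph on (a finite set of) natural-number vertices: a finite set of
vertices together with a finite set of edges (ordered pairs). -/
structure DG : Type where
  verts : Finset ℕ
  edges : Finset (ℕ × ℕ)

namespace DG

/-- `D` is an oriented graph: edges lie between vertices, the edge relation is
irreflexive and antisymmetric, and the vertex set is nonempty. -/
def IsOriented (D : DG) : Prop :=
  (∀ e ∈ D.edges, e.1 ∈ D.verts ∧ e.2 ∈ D.verts) ∧
  (∀ e ∈ D.edges, e.1 ≠ e.2) ∧
  (∀ a b : ℕ, (a, b) ∈ D.edges → (b, a) ∉ D.edges) ∧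
  D.verts.Nonempty

/-- A `W`-vertex: no edge ends in it. -/
def isWVert (D : DG) (a : ℕ) : Prop := a ∈ D.verts ∧ ∀ b, (b, a) ∉ D.edges

/-- An `E`-vertex: no edge begins in it. -/
def isEVert (D : DG) (a : ℕ) : Prop := a ∈ D.verts ∧ ∀ b, (a, b) ∉ D.edges

/-- An inner vertex: some edge ends in it and some edge begins in it. -/
def isInner (D : DG) (a : ℕ) : Prop :=
  a ∈ D.verts ∧ (∃ b, (b, a) ∈ D.edges) ∧ (∃ b, (a, b) ∈ D.edges)

/-- A `W`-edge: an edge beginning in a `W`-vertex. -/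
def isWEdge (D : DG) (e : ℕ × ℕ) : Prop := e ∈ D.edges ∧ D.isWVert e.1

/-- An `E`-edge: an edge ending in an `E`-vertex. -/
def isEEdge (D : DG) (e : ℕ × ℕ) : Prop := e ∈ D.edges ∧ D.isEVert e.2

/-- An `X`-edge, for `X ∈ {W, E}`. -/
def isXEdge (D : DG) : XDir → (ℕ × ℕ) → Prop
  | .W => D.isWEdge
  | .E => D.isEEdge

/-- An inner edge: it begins and ends in inner vertices. -/
def isInnerEdge (D : DG) (e : ℕ × ℕ) : Prop :=
  e ∈ D.edges ∧ D.isInner e.1 ∧ D.isInner e.2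

/-- A functional `W`-edge `(a,b)`: `(a,c) ∈ D` implies `b = c`. -/
def funcWEdge (D : DG) (e : ℕ × ℕ) : Prop :=
  D.isWEdge e ∧ ∀ c, (e.1, c) ∈ D.edges → c = e.2

/-- A functional `E`-edge `(b,a)`: `(c,a) ∈ D` implies `b = c`. -/
def funcEEdge (D : DG) (e : ℕ × ℕ) : Prop :=
  D.isEEdge e ∧ ∀ c, (c, e.2) ∈ D.edges → c = e.1

/-- `D` is `W`-`E`-functional: all its `W`-edges and `E`-edges are functional. -/
def WEFunctional (D : DG) : Prop :=
  (∀ e, D.isWEdge e → D.funcWEdge e) ∧ (∀ e, D.isEEdge e → D.funcEEdge e)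

/-- Semi-adjacency: `(a,b)` or `(b,a)` is an edge. -/
def semiAdj (D : DG) (a b : ℕ) : Prop := (a, b) ∈ D.edges ∨ (b, a) ∈ D.edges

/-- A semipath: a nonempty sequence of mutually distinct vertices in which any
two consecutive vertices are semi-adjacent. -/
def IsSemipath (D : DG) (l : List ℕ) : Prop :=
  l ≠ [] ∧ (∀ a ∈ l, a ∈ D.verts) ∧ l.Nodup ∧ l.Chain' D.semiAdj

/-- A path: a nonempty sequence of mutually distinct vertices in which
`(a_i, a_{i+1})` is an edge for consecutive vertices. -/
def IsPath (D : DG) (l : List ℕ) : Prop :=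
  l ≠ [] ∧ (∀ a ∈ l, a ∈ D.verts) ∧ l.Nodup ∧
    l.Chain' (fun a b => (a, b) ∈ D.edges)

/-- A semicycle: a sequence `a_1, ..., a_n` of vertices with `n ≥ 4`,
`a_1 = a_n`, `a_1, ..., a_{n-1}` mutually distinct, and consecutive vertices
semi-adjacent. -/
def IsSemicycle (D : DG) (l : List ℕ) : Prop :=
  4 ≤ l.length ∧ (∀ a ∈ l, a ∈ D.verts) ∧ l.head? = l.getLast? ∧
  l.dropLast.Nodup ∧ l.Chain' D.semiAdj

/-- `D` is weakly connected: every two vertices are joined by a semipath. -/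
def WeaklyConnected (D : DG) : Prop :=
  ∀ a ∈ D.verts, ∀ b ∈ D.verts,
    ∃ l, D.IsSemipath l ∧ l.head? = some a ∧ l.getLast? = some b

/-- `D` is asemicyclic: it has no semicycles. -/
def Asemicyclic (D : DG) : Prop := ∀ l, ¬ D.IsSemicycle l

/-- The cut `D_W[e_W - e_E]D_E`:
`(D_W - {e_W}) ∪ (D_E - {e_E}) ∪ {(e_W.1, e_E.2)}` on the union of the vertex
sets with `e_W.2` and `e_E.1` omitted. -/
def cut (DW DE : DG) (eW eE : ℕ × ℕ) : DG where
  verts := (DW.verts ∪ DE.verts) \ {eW.2, eE.1}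
  edges := insert (eW.1, eE.2) ((DW.edges.erase eW) ∪ (DE.edges.erase eE))

end DG

/-- The type of assignments of four distinguished edges `NW, SW, NE, SE`. -/
abbrev DistE : Type := YDir → XDir → ℕ × ℕ

/-- The type of labellings assigning to (inner) vertices four edges. -/
abbrev Lab : Type := ℕ → YDir → XDir → ℕ × ℕ

/-- `⟨D, ε⟩` is a basic K-graph: `D` is an oriented graph with a single inner
vertex `b`, all edges begin or end in `b`, every other vertex is joined to `b`
by an edge, there is at least one edge ending in `b` and one beginning in `b`,
the distinguished edges `ε Y W` end in `b` and `ε Y E` begin in `b`, and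
(XYB): if there are at least two `X`-edges then `NX ≠ SX`. -/
def IsBasicK (D : DG) (ε : DistE) : Prop :=
  D.IsOriented ∧
  ∃ b ∈ D.verts,
    (∀ e ∈ D.edges, e.1 = b ∨ e.2 = b) ∧
    (∀ v ∈ D.verts, v = b ∨ (v, b) ∈ D.edges ∨ (b, v) ∈ D.edges) ∧
    (∃ a, (a, b) ∈ D.edges) ∧ (∃ c, (b, c) ∈ D.edges) ∧
    (∀ Y : YDir, ε Y XDir.W ∈ D.edges ∧ (ε Y XDir.W).2 = b ∧
      ε Y XDir.E ∈ D.edges ∧ (ε Y XDir.E).1 = b) ∧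
    (2 ≤ (D.edges.filter (fun e => e.2 = b)).card →
      ε YDir.N XDir.W ≠ ε YDir.S XDir.W) ∧
    (2 ≤ (D.edges.filter (fun e => e.1 = b)).card →
      ε YDir.N XDir.E ≠ ε YDir.S XDir.E)

/-- `⟨D, ε⟩` is a basic Q-graph: as a basic K-graph but with no requirement
(XYB) on the distinguished edges. -/
def IsBasicQ (D : DG) (ε : DistE) : Prop :=
  D.IsOriented ∧
  ∃ b ∈ D.verts,
    (∀ e ∈ D.edges, e.1 = b ∨ e.2 = b) ∧
    (∀ v ∈ D.verts, v = b ∨ (v, b) ∈ D.edges ∨ (b, v) ∈ D.edges) ∧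
    (∃ a, (a, b) ∈ D.edges) ∧ (∃ c, (b, c) ∈ D.edges) ∧
    (∀ Y : YDir, ε Y XDir.W ∈ D.edges ∧ (ε Y XDir.W).2 = b ∧
      ε Y XDir.E ∈ D.edges ∧ (ε Y XDir.E).1 = b)

/-- Finite binary trees whose nodes carry an oriented graph, four
distinguished edges, and (at internal nodes) the two cut edges. -/
inductive CTree : Type
  | leaf (D : DG) (ε : DistE)
  | node (D : DG) (ε : DistE) (eW eE : ℕ × ℕ) (l r : CTree)

namespace CTree

/-- The graph at the root of the tree. -/
def rootGraph : CTree → DG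
  | .leaf D _ => D
  | .node D _ _ _ _ _ => D

/-- The distinguished edges at the root of the tree. -/
def dist : CTree → DistE
  | .leaf _ ε => ε
  | .node _ ε _ _ _ _ => ε

/-- The list of graphs-with-distinguished-edges at the leaves of the tree
(the basic K-graphs determining the leaves of a construction). -/
def leaves : CTree → List (DG × DistE)
  | .leaf D ε => [(D, ε)]
  | .node _ _ _ _ l r => l.leaves ++ r.leaves

end CTree

/-- The tree `G_W[e_W - e_E]G_E`, whose root graph is the cut of the root
graphs and whose distinguished edges are given by (XYD). -/
def mkNode (GW GE : CTree) (eW eE : ℕ × ℕ) : CTree :=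
  .node (DG.cut GW.rootGraph GE.rootGraph eW eE)
    (fun Y X =>
      match X with
      | .W => if eE = GE.dist Y XDir.W then GW.dist Y XDir.W else GE.dist Y XDir.W
      | .E => if eW = GW.dist Y XDir.E then GE.dist Y XDir.E else GW.dist Y XDir.E)
    eW eE GW GE

/-- The inductive notion of construction (of a global K-graph). -/
inductive IsConstruction : CTree → Prop
  | leaf (D : DG) (ε : DistE) (h : IsBasicK D ε) : IsConstruction (.leaf D ε)
  | node (D : DG) (ε : DistE) (eW eE : ℕ × ℕ) (GW GE : CTree)
      (hW : IsConstruction GW) (hE : IsConstruction GE)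
      (hdisj : Disjoint GW.rootGraph.verts GE.rootGraph.verts)
      (heW : GW.rootGraph.funcEEdge eW)
      (heE : GE.rootGraph.funcWEdge eE)
      (hD : D = DG.cut GW.rootGraph GE.rootGraph eW eE)
      (hXYC : ∀ Y : YDir, eW = GW.dist Y XDir.E ∨ eE = GE.dist Y XDir.W)
      (hεW : ∀ Y : YDir, ε Y XDir.W =
        if eE = GE.dist Y XDir.W then GW.dist Y XDir.W else GE.dist Y XDir.W)
      (hεE : ∀ Y : YDir, ε Y XDir.E =
        if eW = GW.dist Y XDir.E then GE.dist Y XDir.E else GW.dist Y XDir.E) :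
      IsConstruction (.node D ε eW eE GW GE)

/-- The inductive notion of construction of a global Q-graph: as
`IsConstruction` but with basic Q-graphs at the leaves. -/
inductive IsConstructionQ : CTree → Prop
  | leaf (D : DG) (ε : DistE) (h : IsBasicQ D ε) : IsConstructionQ (.leaf D ε)
  | node (D : DG) (ε : DistE) (eW eE : ℕ × ℕ) (GW GE : CTree)
      (hW : IsConstructionQ GW) (hE : IsConstructionQ GE)
      (hdisj : Disjoint GW.rootGraph.verts GE.rootGraph.verts)
      (heW : GW.rootGraph.funcEEdge eW)
      (heE : GE.rootGraph.funcWEdge eE)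
      (hD : D = DG.cut GW.rootGraph GE.rootGraph eW eE)
      (hXYC : ∀ Y : YDir, eW = GW.dist Y XDir.E ∨ eE = GE.dist Y XDir.W)
      (hεW : ∀ Y : YDir, ε Y XDir.W =
        if eE = GE.dist Y XDir.W then GW.dist Y XDir.W else GE.dist Y XDir.W)
      (hεE : ∀ Y : YDir, ε Y XDir.E =
        if eW = GW.dist Y XDir.E then GE.dist Y XDir.E else GW.dist Y XDir.E) :
      IsConstructionQ (.node D ε eW eE GW GE)

/-- ρ-equivalence of constructions: the least equivalence relation containing
ρ1, ρ2, ρ3 and closed under congruence with respect to cuts. -/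
inductive RhoEquiv : CTree → CTree → Prop
  | rho1 (P Q R : CTree) (eW eE fW fE : ℕ × ℕ)
      (hP : IsConstruction P) (hQ : IsConstruction Q) (hR : IsConstruction R)
      (heW : P.rootGraph.isEEdge eW) (hfW : Q.rootGraph.isEEdge fW)
      (heE : Q.rootGraph.isWEdge eE) (hfE : R.rootGraph.isWEdge fE)
      (h1 : IsConstruction (mkNode (mkNode P Q eW eE) R fW fE))
      (h2 : IsConstruction (mkNode P (mkNode Q R fW fE) eW eE)) :
      RhoEquiv (mkNode (mkNode P Q eW eE) R fW fE)
               (mkNode P (mkNode Q R fW fE) eW eE)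
  | rho2 (P Q R : CTree) (eW eE fW fE : ℕ × ℕ)
      (hP : IsConstruction P) (hQ : IsConstruction Q) (hR : IsConstruction R)
      (heW : P.rootGraph.isEEdge eW) (hfW : P.rootGraph.isEEdge fW)
      (hne : eW ≠ fW)
      (heE : Q.rootGraph.isWEdge eE) (hfE : R.rootGraph.isWEdge fE)
      (h1 : IsConstruction (mkNode (mkNode P Q eW eE) R fW fE))
      (h2 : IsConstruction (mkNode (mkNode P R fW fE) Q eW eE)) :
      RhoEquiv (mkNode (mkNode P Q eW eE) R fW fE)
               (mkNode (mkNode P R fW fE) Q eW eE)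
  | rho3 (P Q R : CTree) (eW eE fW fE : ℕ × ℕ)
      (hP : IsConstruction P) (hQ : IsConstruction Q) (hR : IsConstruction R)
      (heE : P.rootGraph.isWEdge eE) (hfE : P.rootGraph.isWEdge fE)
      (hne : eE ≠ fE)
      (heW : Q.rootGraph.isEEdge eW) (hfW : R.rootGraph.isEEdge fW)
      (h1 : IsConstruction (mkNode R (mkNode Q P eW eE) fW fE))
      (h2 : IsConstruction (mkNode Q (mkNode R P fW fE) eW eE)) :
      RhoEquiv (mkNode R (mkNode Q P eW eE) fW fE)
               (mkNode Q (mkNode R P fW fE) eW eE)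
  | congr (G1 G2 H1 H2 : CTree) (eW eE : ℕ × ℕ)
      (h12 : RhoEquiv G1 G2) (h34 : RhoEquiv H1 H2)
      (hc1 : IsConstruction (mkNode G1 H1 eW eE))
      (hc2 : IsConstruction (mkNode G2 H2 eW eE)) :
      RhoEquiv (mkNode G1 H1 eW eE) (mkNode G2 H2 eW eE)
  | refl (G : CTree) (h : IsConstruction G) : RhoEquiv G G
  | symm {G H : CTree} (h : RhoEquiv G H) : RhoEquiv H G
  | trans {G H K : CTree} (h1 : RhoEquiv G H) (h2 : RhoEquiv H K) :
      RhoEquiv G K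

/-- The class `[G]`: all constructions with the same root graph as `G` whose
leaves are determined by the same basic K-graphs as those of `G`. -/
def classOf (G : CTree) : Set CTree :=
  {H | IsConstruction H ∧ H.rootGraph = G.rootGraph ∧
    ∀ p : DG × DistE, p ∈ H.leaves ↔ p ∈ G.leaves}

/-- Renaming the vertices of a digraph along a function. -/
def DG.rename (f : ℕ → ℕ) (D : DG) : DG where
  verts := D.verts.image f
  edges := D.edges.image (fun e => (f e.1, f e.2))

/-- Renaming the vertices throughout a tree. -/
def CTree.rename (f : ℕ → ℕ) : CTree → CTree
  | .leaf D ε => .leaf (DG.rename f D) (fun Y X => (f (ε Y X).1, f (ε Y X).2))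
  | .node D ε eW eE l r =>
      .node (DG.rename f D) (fun Y X => (f (ε Y X).1, f (ε Y X).2))
        (f eW.1, f eW.2) (f eE.1, f eE.2) (l.rename f) (r.rename f)

/-- σ-equivalence: `H` is obtained from `G` by a bijective renaming of
vertices that fixes the root vertices (so only secondary vertices may be
renamed). -/
def SigmaEquiv (G H : CTree) : Prop :=
  ∃ f : ℕ ≃ ℕ, (∀ v ∈ G.rootGraph.verts, f v = v) ∧ H = G.rename f

/-- The global compass graph `‖G‖`: all constructions σ-equivalent to a
construction in `[G]`. -/
def normClass (G : CTree) : Set CTree :=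
  {H | ∃ K ∈ classOf G, SigmaEquiv K H}

/-- The labelling `L` of `λ(G) = ⟨D, L⟩`, defined by induction on `G`: at a
leaf given by a basic K-graph with inner vertex `b`, `YX(b) = YX(B)`; at a
node, the value is inherited from the appropriate subtree unless it is one of
the two cut edges, in which case it is the new edge introduced by the cut. -/
def lamG : CTree → Lab
  | .leaf _ ε => fun _ => ε
  | .node _ _ eW eE l r => fun a Y X =>
      let v := if a ∈ l.rootGraph.verts then lamG l a Y X else lamG r a Y X
      if v = eW ∨ v = eE then (eW.1, eE.2) else v

/-- `L` assigns to every inner vertex `a` edges `L a Y W` ending in `a` and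
edges `L a Y E` beginning in `a`. -/
def ProperLab (D : DG) (L : Lab) : Prop :=
  ∀ a, D.isInner a → ∀ Y : YDir,
    L a Y XDir.W ∈ D.edges ∧ (L a Y XDir.W).2 = a ∧
    L a Y XDir.E ∈ D.edges ∧ (L a Y XDir.E).1 = a

/-- `⟨D, L⟩` separates `N` from `S`. -/
def SeparatesNS (D : DG) (L : Lab) : Prop :=
  ∀ a, D.isInner a →
    (2 ≤ (D.edges.filter (fun e => e.2 = a)).card →
      L a YDir.N XDir.W ≠ L a YDir.S XDir.W) ∧
    (2 ≤ (D.edges.filter (fun e => e.1 = a)).card →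
      L a YDir.N XDir.E ≠ L a YDir.S XDir.E)

/-- A list `a_1, ..., a_n` is `Y`-decent in `⟨D, L⟩`: `n = 1`, or
`YE(a_1) = (a_1, a_2)`, or `YW(a_n) = (a_{n-1}, a_n)`. -/
def Ydecent (L : Lab) (Y : YDir) (l : List ℕ) : Prop :=
  ∀ a b t, l = a :: b :: t →
    (L a Y XDir.E = (a, b) ∨
      ∃ c d t', l.reverse = d :: c :: t' ∧ L d Y XDir.W = (c, d))

/-- `⟨D, L⟩` is a local compass graph. -/
def IsLocalCompass (D : DG) (L : Lab) : Prop :=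
  D.IsOriented ∧ ProperLab D L ∧
  D.WeaklyConnected ∧ D.Asemicyclic ∧ D.WEFunctional ∧ (∃ a, D.isInner a) ∧
  SeparatesNS D L ∧
  (∀ l, D.IsPath l → Ydecent L YDir.N l ∧ Ydecent L YDir.S l)

/-- A path (list) covers an edge `g` when `g` is a pair of consecutive
vertices of the list. -/
def covers (l : List ℕ) (g : ℕ × ℕ) : Prop := g ∈ l.zip l.tail

/-- A `YX`-edge in `⟨D, L⟩`. -/
def YXedge (D : DG) (L : Lab) (Y : YDir) : XDir → (ℕ × ℕ) → Prop
  | .W, g => g ∈ D.edges ∧ (L g.2 Y XDir.W = g ∨ D.isEEdge g)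
  | .E, g => g ∈ D.edges ∧ (L g.1 Y XDir.E = g ∨ D.isWEdge g)

/-- A proper semipath: a semipath such that neither it nor its reverse is a
path. -/
def ProperSemipath (D : DG) (l : List ℕ) : Prop :=
  D.IsSemipath l ∧ ¬ D.IsPath l ∧ ¬ D.IsPath l.reverse

/-- A transversal edge `(a,b)`: there is a proper semipath beginning with
`a, b` and a proper semipath beginning with `b, a`. -/
def Transversal (D : DG) (e : ℕ × ℕ) : Prop :=
  e ∈ D.edges ∧
  (∃ t, ProperSemipath D (e.1 :: e.2 :: t)) ∧
  (∃ t, ProperSemipath D (e.2 :: e.1 :: t))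

/-- The edge of `D` that connects two semi-adjacent vertices `a` and `b`. -/
def connEdge (D : DG) (a b : ℕ) : ℕ × ℕ :=
  if (a, b) ∈ D.edges then (a, b) else (b, a)

/-- The connecting edges of a list: the edges connecting its consecutive
vertices. -/
def connEdges (D : DG) (l : List ℕ) (e : ℕ × ℕ) : Prop :=
  ∃ p ∈ l.zip l.tail, e = connEdge D p.1 p.2

/-- A bifurcation: three distinct edges with a common vertex. -/
def Bifurcation (D : DG) (e1 e2 e3 : ℕ × ℕ) : Prop :=
  e1 ∈ D.edges ∧ e2 ∈ D.edges ∧ e3 ∈ D.edges ∧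
  e1 ≠ e2 ∧ e1 ≠ e3 ∧ e2 ≠ e3 ∧
  ∃ v, (v = e1.1 ∨ v = e1.2) ∧ (v = e2.1 ∨ v = e2.2) ∧ (v = e3.1 ∨ v = e3.2)

/-- A K-graph: a weakly connected, asemicyclic, `W`-`E`-functional oriented
graph with an inner vertex in which no bifurcation is transversal. -/
def IsKGraph (D : DG) : Prop :=
  D.IsOriented ∧ D.WeaklyConnected ∧ D.Asemicyclic ∧ D.WEFunctional ∧
  (∃ a, D.isInner a) ∧
  ∀ e1 e2 e3, Bifurcation D e1 e2 e3 →
    ¬ (Transversal D e1 ∧ Transversal D e2 ∧ Transversal D e3)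

/-- A Q-graph: a weakly connected, asemicyclic, `W`-`E`-functional oriented
graph with an inner vertex. -/
def IsQGraph (D : DG) : Prop :=
  D.IsOriented ∧ D.WeaklyConnected ∧ D.Asemicyclic ∧ D.WEFunctional ∧
  ∃ a, D.isInner a


lemma cut_mem_edges {DW DE : DG} {eW eE : ℕ × ℕ} {g : ℕ × ℕ} :
    g ∈ (DG.cut DW DE eW eE).edges ↔
      g = (eW.1, eE.2) ∨ (g ∈ DW.edges ∧ g ≠ eW) ∨ (g ∈ DE.edges ∧ g ≠ eE) := by
  simp only [DG.cut, Finset.mem_insert, Finset.mem_union, Finset.mem_erase]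
  tauto

lemma cut_mem_verts {DW DE : DG} {eW eE : ℕ × ℕ} {v : ℕ} :
    v ∈ (DG.cut DW DE eW eE).verts ↔
      (v ∈ DW.verts ∨ v ∈ DE.verts) ∧ v ≠ eW.2 ∧ v ≠ eE.1 := by
  simp only [DG.cut, Finset.mem_sdiff, Finset.mem_union, Finset.mem_insert,
    Finset.mem_singleton]
  tauto

lemma cut_oriented {DW DE : DG} {eW eE : ℕ × ℕ}
    (hW : DW.IsOriented) (hE : DE.IsOriented)
    (hdisj : Disjoint DW.verts DE.verts)
    (heW : DW.funcEEdge eW) (heE : DE.funcWEdge eE) :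
    (DG.cut DW DE eW eE).IsOriented := by
  obtain ⟨hWv, hWirr, hWanti, -⟩ := hW
  obtain ⟨hEv, hEirr, hEanti, -⟩ := hE
  have hdl := Finset.disjoint_left.1 hdisj
  have heWm : eW ∈ DW.edges := heW.1.1
  have heEm : eE ∈ DE.edges := heE.1.1
  have heW1 : eW.1 ∈ DW.verts := (hWv _ heWm).1
  have heW2 : eW.2 ∈ DW.verts := (hWv _ heWm).2
  have heE1 : eE.1 ∈ DE.verts := (hEv _ heEm).1
  have heE2 : eE.2 ∈ DE.verts := (hEv _ heEm).2
  -- eW.2 is an E-vertex of DW; eE.1 is a W-vertex of DE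
  have heWE : ∀ c, (eW.2, c) ∉ DW.edges := heW.1.2.2
  have heEW : ∀ c, (c, eE.1) ∉ DE.edges := heE.1.2.2
  refine ⟨?_, ?_, ?_, ⟨eW.1, ?_⟩⟩
  · intro e he
    rcases cut_mem_edges.1 he with rfl | ⟨he, hne⟩ | ⟨he, hne⟩
    · constructor
      · exact cut_mem_verts.2 ⟨Or.inl heW1, hWirr _ heWm, fun h => hdl (h ▸ heW1) heE1⟩
      · exact cut_mem_verts.2 ⟨Or.inr heE2, fun h => hdl heW2 (h ▸ heE2),
          fun h => hEirr _ heEm h.symm⟩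
    · have h1 := (hWv _ he).1
      have h2 := (hWv _ he).2
      refine ⟨cut_mem_verts.2 ⟨Or.inl h1, ?_, fun h => hdl (h ▸ h1) heE1⟩,
        cut_mem_verts.2 ⟨Or.inl h2, ?_, fun h => hdl (h ▸ h2) heE1⟩⟩
      · intro h; exact heWE e.2 (by rw [← h]; exact he)
      · intro h
        have := heW.2 e.1 (by rw [← h]; exact he)
        exact hne (Prod.ext this h)
    · have h1 := (hEv _ he).1
      have h2 := (hEv _ he).2
      refine ⟨cut_mem_verts.2 ⟨Or.inr h1, fun h => hdl heW2 (h ▸ h1), ?_⟩,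
        cut_mem_verts.2 ⟨Or.inr h2, fun h => hdl heW2 (h ▸ h2), ?_⟩⟩
      · intro h
        have := heE.2 e.2 (by rw [← h]; exact he)
        exact hne (Prod.ext h this)
      · intro h; exact heEW e.1 (by rw [← h]; exact he)
  · intro e he
    rcases cut_mem_edges.1 he with rfl | ⟨he, _⟩ | ⟨he, _⟩
    · exact fun h => hdl heW1 (h ▸ heE2)
    · exact hWirr _ he
    · exact hEirr _ he
  · intro x y hxy hyx
    have hmemW : ∀ {u v : ℕ}, (u, v) ∈ DW.edges → u ∈ DW.verts ∧ v ∈ DW.verts :=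
      fun h => hWv _ h
    have hmemE : ∀ {u v : ℕ}, (u, v) ∈ DE.edges → u ∈ DE.verts ∧ v ∈ DE.verts :=
      fun h => hEv _ h
    rcases cut_mem_edges.1 hxy with h1 | ⟨h1, _⟩ | ⟨h1, _⟩ <;>
      rcases cut_mem_edges.1 hyx with h2 | ⟨h2, _⟩ | ⟨h2, _⟩
    · have hy1 : y = eE.2 := congrArg Prod.snd h1
      have hy2 : y = eW.1 := congrArg Prod.fst h2
      have h3 : y ∈ DW.verts := by rw [hy2]; exact heW1
      have h4 : y ∈ DE.verts := by rw [hy1]; exact heE2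
      exact hdl h3 h4
    · have hy : y = eE.2 := congrArg Prod.snd h1
      have h4 : y ∈ DE.verts := by rw [hy]; exact heE2
      exact hdl (hmemW h2).1 h4
    · have hx : x = eW.1 := congrArg Prod.fst h1
      have h3 : x ∈ DW.verts := by rw [hx]; exact heW1
      exact hdl h3 (hmemE h2).2
    · have hx : x = eE.2 := congrArg Prod.snd h2
      have h4 : x ∈ DE.verts := by rw [hx]; exact heE2
      exact hdl (hmemW h1).1 h4
    · exact hWanti x y h1 h2
    · exact hdl (hmemW h1).1 (hmemE h2).2
    · have hy : y = eW.1 := congrArg Prod.fst h2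
      have h3 : y ∈ DW.verts := by rw [hy]; exact heW1
      exact hdl h3 (hmemE h1).2
    · exact hdl (hmemW h2).2 (hmemE h1).1
    · exact hEanti x y h1 h2
  · exact cut_mem_verts.2 ⟨Or.inl heW1, hWirr _ heWm, fun h => hdl (h ▸ heW1) heE1⟩

/-- Key invariant: the root graph of a construction is oriented, and the
distinguished edges are edges whose appropriate endpoint is inner. -/
lemma construction_key {G : CTree} (hG : IsConstruction G) :
    G.rootGraph.IsOriented ∧
    ∀ Y : YDir,
      G.dist Y XDir.W ∈ G.rootGraph.edges ∧
      G.rootGraph.isInner (G.dist Y XDir.W).2 ∧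
      G.dist Y XDir.E ∈ G.rootGraph.edges ∧
      G.rootGraph.isInner (G.dist Y XDir.E).1 := by
  induction hG with
  | leaf D ε h =>
    obtain ⟨hor, b, hb, -, -, ⟨a0, ha0⟩, ⟨c0, hc0⟩, hdist, -, -⟩ := h
    refine ⟨hor, fun Y => ?_⟩
    obtain ⟨hW1, hW2, hE1, hE2⟩ := hdist Y
    exact ⟨hW1, by rw [CTree.dist] at *; rw [hW2]; exact ⟨hb, ⟨a0, ha0⟩, ⟨c0, hc0⟩⟩,
      hE1, by rw [CTree.dist] at *; rw [hE2]; exact ⟨hb, ⟨a0, ha0⟩, ⟨c0, hc0⟩⟩⟩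
  | node D ε eW eE GW GE hW hE hdisj heW heE hD hXYC hεW hεE ihW ihE =>
    obtain ⟨horW, hdW⟩ := ihW
    obtain ⟨horE, hdE⟩ := ihE
    have hor : D.IsOriented := hD ▸ cut_oriented horW horE hdisj heW heE
    have hdl := Finset.disjoint_left.1 hdisj
    have heWm : eW ∈ GW.rootGraph.edges := heW.1.1
    have heEm : eE ∈ GE.rootGraph.edges := heE.1.1
    have heW2E : ∀ c, (eW.2, c) ∉ GW.rootGraph.edges := heW.1.2.2
    have heE1W : ∀ c, (c, eE.1) ∉ GE.rootGraph.edges := heE.1.2.2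
    have heE1v : eE.1 ∈ GE.rootGraph.verts := heE.1.2.1
    have heW2v : eW.2 ∈ GW.rootGraph.verts := heW.1.2.1
    refine ⟨hor, fun Y => ?_⟩
    have hdistY : (CTree.node D ε eW eE GW GE).dist Y = ε Y := rfl
    have hrg : (CTree.node D ε eW eE GW GE).rootGraph = D := rfl
    rw [hrg]
    constructor
    · -- W-edge is an edge of D
      rw [hdistY, hεW Y, hD]
      split
      · rcases hdW Y with ⟨hg, hgin, -, -⟩
        refine cut_mem_edges.2 (Or.inr (Or.inl ⟨hg, ?_⟩))
        intro h
        obtain ⟨-, -, c, hc⟩ := hgin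
        exact heW2E c (h ▸ hc)
      · next hne =>
        rcases hdE Y with ⟨hg, hgin, -, -⟩
        exact cut_mem_edges.2 (Or.inr (Or.inr ⟨hg, fun h => hne h.symm⟩))
    constructor
    · -- its end is inner in D
      rw [hdistY, hεW Y, hD]
      split
      · rcases hdW Y with ⟨hg, hgin, -, -⟩
        set g := GW.dist Y XDir.W with hgdef
        obtain ⟨hgv, hin1, c, hc⟩ := hgin
        have hg2neW2 : g.2 ≠ eW.2 := fun h => heW2E c (h ▸ hc)
        have hgne : g ≠ eW := fun h => hg2neW2 (congrArg Prod.snd h)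
        refine ⟨cut_mem_verts.2 ⟨Or.inl hgv, hg2neW2, fun h => hdl (h ▸ hgv) heE1v⟩,
          ⟨g.1, cut_mem_edges.2 (Or.inr (Or.inl ⟨hg, hgne⟩))⟩, ?_⟩
        by_cases hcW : (g.2, c) = eW
        · exact ⟨eE.2, by
            have : g.2 = eW.1 := congrArg Prod.fst hcW
            rw [this]; exact cut_mem_edges.2 (Or.inl rfl)⟩
        · exact ⟨c, cut_mem_edges.2 (Or.inr (Or.inl ⟨hc, hcW⟩))⟩
      · next hne =>
        rcases hdE Y with ⟨hg, hgin, -, -⟩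
        set g := GE.dist Y XDir.W with hgdef
        obtain ⟨hgv, ⟨d, hd⟩, c, hc⟩ := hgin
        have hg2neE1 : g.2 ≠ eE.1 := fun h => heE1W d (h ▸ hd)
        have hgne : g ≠ eE := fun h => hne h.symm
        have hcne : (g.2, c) ≠ eE := fun h => heE1W d ((congrArg Prod.fst h) ▸ hd)
        exact ⟨cut_mem_verts.2 ⟨Or.inr hgv, fun h => hdl heW2v (h ▸ hgv), hg2neE1⟩,
          ⟨g.1, cut_mem_edges.2 (Or.inr (Or.inr ⟨hg, hgne⟩))⟩,
          ⟨c, cut_mem_edges.2 (Or.inr (Or.inr ⟨hc, hcne⟩))⟩⟩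
    constructor
    · -- E-edge is an edge of D
      rw [hdistY, hεE Y, hD]
      split
      · rcases hdE Y with ⟨-, -, hg, hgin⟩
        refine cut_mem_edges.2 (Or.inr (Or.inr ⟨hg, ?_⟩))
        intro h
        obtain ⟨-, ⟨d, hd⟩, -⟩ := hgin
        exact heE1W d (h ▸ hd)
      · next hne =>
        rcases hdW Y with ⟨-, -, hg, hgin⟩
        exact cut_mem_edges.2 (Or.inr (Or.inl ⟨hg, fun h => hne h.symm⟩))
    · -- its start is inner in D
      rw [hdistY, hεE Y, hD]
      split
      · rcases hdE Y with ⟨-, -, hg, hgin⟩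
        set g := GE.dist Y XDir.E with hgdef
        obtain ⟨hgv, ⟨d, hd⟩, c, hc⟩ := hgin
        have hg1neE1 : g.1 ≠ eE.1 := fun h => heE1W d (h ▸ hd)
        have hgne : g ≠ eE := fun h => hg1neE1 (congrArg Prod.fst h)
        refine ⟨cut_mem_verts.2 ⟨Or.inr hgv, fun h => hdl heW2v (h ▸ hgv), hg1neE1⟩,
          ?_, ⟨g.2, cut_mem_edges.2 (Or.inr (Or.inr ⟨hg, hgne⟩))⟩⟩
        by_cases hcE : (d, g.1) = eE
        · exact ⟨eW.1, by
            have : g.1 = eE.2 := congrArg Prod.snd hcE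
            rw [this]; exact cut_mem_edges.2 (Or.inl rfl)⟩
        · exact ⟨d, cut_mem_edges.2 (Or.inr (Or.inr ⟨hd, hcE⟩))⟩
      · next hne =>
        rcases hdW Y with ⟨-, -, hg, hgin⟩
        set g := GW.dist Y XDir.E with hgdef
        obtain ⟨hgv, ⟨d, hd⟩, c, hc⟩ := hgin
        have hg1neW2 : g.1 ≠ eW.2 := fun h => heW2E c (h ▸ hc)
        have hgne : g ≠ eW := fun h => hne h.symm
        have hdne : (d, g.1) ≠ eW := fun h => heW2E c ((congrArg Prod.snd h) ▸ hc)
        exact ⟨cut_mem_verts.2 ⟨Or.inl hgv, hg1neW2, fun h => hdl (h ▸ hgv) heE1v⟩,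
          ⟨d, cut_mem_edges.2 (Or.inr (Or.inl ⟨hd, hdne⟩))⟩,
          ⟨g.2, cut_mem_edges.2 (Or.inr (Or.inl ⟨hg, hgne⟩))⟩⟩

/-- Proposition 4.1: (W) if `YW(G) = (a,b)` then `YW(b) = (a,b)` in `λ(G)`;
(E) if `YE(G) = (a,b)` then `YE(a) = (a,b)` in `λ(G)`. -/
theorem prop_4_1 (G : CTree) (hG : IsConstruction G) (Y : YDir) (a b : ℕ) :
    (G.dist Y XDir.W = (a, b) → lamG G b Y XDir.W = (a, b)) ∧
    (G.dist Y XDir.E = (a, b) → lamG G a Y XDir.E = (a, b)) := by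
  induction hG generalizing Y a b with
  | leaf D ε h => exact ⟨fun h => h, fun h => h⟩
  | node D ε eW eE GW GE hW hE hdisj heW heE hD hXYC hεW hεE ihW ihE =>
    have keyW := construction_key hW
    have keyE := construction_key hE
    have hdl := Finset.disjoint_left.1 hdisj
    have heW2E : ∀ c, (eW.2, c) ∉ GW.rootGraph.edges := heW.1.2.2
    have heE1W : ∀ c, (c, eE.1) ∉ GE.rootGraph.edges := heE.1.2.2
    have heE1v : eE.1 ∈ GE.rootGraph.verts := heE.1.2.1
    have heWm : eW ∈ GW.rootGraph.edges := heW.1.1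
    have heW1v : eW.1 ∈ GW.rootGraph.verts := (keyW.1.1 _ heWm).1
    have heW2v : eW.2 ∈ GW.rootGraph.verts := (keyW.1.1 _ heWm).2
    have hdistY : (CTree.node D ε eW eE GW GE).dist Y = ε Y := rfl
    constructor
    · intro hab
      rw [hdistY, hεW Y] at hab
      show (if (if b ∈ GW.rootGraph.verts then lamG GW b Y XDir.W
              else lamG GE b Y XDir.W) = eW ∨ _ then _ else _) = (a, b)
      by_cases hcond : eE = GE.dist Y XDir.W
      · rw [if_pos hcond] at hab
        -- (a,b) = GW.dist Y W
        obtain ⟨hgm, hgin, -, -⟩ := keyW.2 Y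
        rw [hab] at hgm hgin
        have hbin : GW.rootGraph.isInner b := hgin
        have hbv : b ∈ GW.rootGraph.verts := hbin.1
        have hlam := (ihW Y a b).1 hab
        rw [if_pos hbv, hlam]
        have h1 : (a, b) ≠ eW := by
          intro h
          obtain ⟨-, -, c, hc⟩ := hbin
          have : b = eW.2 := congrArg Prod.snd h
          exact heW2E c (this ▸ hc)
        have h2 : (a, b) ≠ eE := by
          intro h
          have ha : a ∈ GW.rootGraph.verts := (keyW.1.1 _ hgm).1
          exact hdl ha (by rw [show a = eE.1 from congrArg Prod.fst h]; exact heE1v)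
        rw [if_neg (by push_neg; exact ⟨h1, h2⟩)]
      · rw [if_neg hcond] at hab
        obtain ⟨hgm, hgin, -, -⟩ := keyE.2 Y
        rw [hab] at hgm hgin
        have hbin : GE.rootGraph.isInner b := hgin
        have hbv : b ∈ GE.rootGraph.verts := hbin.1
        have hbnW : b ∉ GW.rootGraph.verts := fun h => hdl h hbv
        have hlam := (ihE Y a b).1 hab
        rw [if_neg hbnW, hlam]
        have h1 : (a, b) ≠ eW := fun h =>
          hdl (by rw [show b = eW.2 from congrArg Prod.snd h]; exact heW2v) hbv
        have h2 : (a, b) ≠ eE := fun h => hcond (h ▸ hab.symm)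
        rw [if_neg (by push_neg; exact ⟨h1, h2⟩)]
    · intro hab
      rw [hdistY, hεE Y] at hab
      show (if (if a ∈ GW.rootGraph.verts then lamG GW a Y XDir.E
              else lamG GE a Y XDir.E) = eW ∨ _ then _ else _) = (a, b)
      by_cases hcond : eW = GW.dist Y XDir.E
      · rw [if_pos hcond] at hab
        obtain ⟨-, -, hgm, hgin⟩ := keyE.2 Y
        rw [hab] at hgm hgin
        have hain : GE.rootGraph.isInner a := hgin
        have hav : a ∈ GE.rootGraph.verts := hain.1
        have hanW : a ∉ GW.rootGraph.verts := fun h => hdl h hav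
        have hlam := (ihE Y a b).2 hab
        rw [if_neg hanW, hlam]
        have h1 : (a, b) ≠ eW := fun h =>
          hdl (by rw [show a = eW.1 from congrArg Prod.fst h]; exact heW1v) hav
        have h2 : (a, b) ≠ eE := by
          intro h
          obtain ⟨-, ⟨d, hd⟩, -⟩ := hain
          have : a = eE.1 := congrArg Prod.fst h
          exact heE1W d (this ▸ hd)
        rw [if_neg (by push_neg; exact ⟨h1, h2⟩)]
      · rw [if_neg hcond] at hab
        obtain ⟨-, -, hgm, hgin⟩ := keyW.2 Y
        rw [hab] at hgm hgin
        have hain : GW.rootGraph.isInner a := hgin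
        have hav : a ∈ GW.rootGraph.verts := hain.1
        have hlam := (ihW Y a b).2 hab
        rw [if_pos hav, hlam]
        have h1 : (a, b) ≠ eW := fun h => hcond (h ▸ hab.symm)
        have h2 : (a, b) ≠ eE := fun h =>
          hdl hav (by rw [show a = eE.1 from congrArg Prod.fst h]; exact heE1v)
        rw [if_neg (by push_neg; exact ⟨h1, h2⟩)]

end PluralCuts
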